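/- arXiv:1412.0906 — 2 statements merged into one kernel-verified Lean document; each statement's English description precedes it below -/
import Mathlib

section
/- Let G be a connected multigraph as above with |V| ≥ 2. Then the following are equivalent: (i) G is 2-connected; (ii) for every v ∈ V, the element [{v}] of Λ(G) is irreducible; (iii) Λ(G) is indecomposable. -/
/-- The underlying simple graph of the multigraph with `e u v` edges joining `u` and
`v`: vertices `u ≠ v` are adjacent iff there is at least one edge between them. -/
def mgraph {V : Type*} (e : V → V → ℕ) : SimpleGraph V :=
  SimpleGraph.fromRel (fun u v => 0 < e u v)

/-- The bilinear pairing on `ℤ^V` given by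
`B(x,y) = Σ_{unordered pairs {u,w}} e(u,w)(x_u − x_w)(y_u − y_w)`
(written as half of the sum over ordered pairs; the division is exact since `e` is
symmetric). -/
def Bform {V : Type*} [Fintype V] (e : V → V → ℕ) (x y : V → ℤ) : ℤ :=
  (∑ u, ∑ w, (e u w : ℤ) * (x u - x w) * (y u - y w)) / 2

/-- The graph lattice `Λ(G) = ℤ^V / ℤ·[V]`, the quotient of `ℤ^V` by the span of the
all-ones vector. -/
abbrev GLat (V : Type*) [Fintype V] :=
  (V → ℤ) ⧸ (Submodule.span ℤ {(fun _ => (1 : ℤ) : V → ℤ)})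

/-- The class of `x : ℤ^V` in the graph lattice `Λ(G)`. -/
abbrev glmk {V : Type*} [Fintype V] (x : V → ℤ) : GLat V := Submodule.Quotient.mk x

/-- The pairing induced by `Bform` on the graph lattice, computed on (arbitrary)
representatives; it is well defined since `Bform` vanishes against constant vectors. -/
noncomputable def qform {V : Type*} [Fintype V] (e : V → V → ℕ) (a b : GLat V) : ℤ :=
  Bform e (Quotient.out a) (Quotient.out b)

/-- The indicator vector `[R] ∈ ℤ^V` of a finite subset `R ⊆ V`. -/
def indFn {V : Type*} [DecidableEq V] (R : Finset V) : V → ℤ :=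
  fun u => if u ∈ R then 1 else 0

/-- An element of the graph lattice is irreducible if it is nonzero and cannot be
written as `y + z` with `y, z` nonzero and `y·z ≥ 0`. -/
def GLIrreducible {V : Type*} [Fintype V] (e : V → V → ℕ) (x : GLat V) : Prop :=
  x ≠ 0 ∧ ¬ ∃ y z : GLat V, y ≠ 0 ∧ z ≠ 0 ∧ x = y + z ∧ 0 ≤ qform e y z

/-!
The pairing is half of the sum over ordered pairs `Σ e(u,w)(x_u − x_w)(y_u − y_w)`; that sum is
a genuine bilinear form `glForm` on `Λ(G)`, and `x·y = glForm x y / 2`. Write `δ_v` for `[{v}]`.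

If `G − v` is connected and `δ_v = y + z` with `y·z ≥ 0`, choose representatives `f + g = [{v}]`.
Across every edge the increments `a` of `f` and `b` of `g` satisfy `|a + b| ≤ 1`, hence `ab ≤ 0`, so
`y·z ≥ 0` forces `ab = 0` on every edge. Off `v` we have `b = −a`, so `f` is constant on `G − v`,
and an edge at `v` then makes `f` or `g` constant, i.e. `y = 0` or `z = 0`.

In an orthogonal splitting of `Λ(G)` every irreducible `δ_v` lies in one of the summands, and both
summands contain some `δ_v`; an edge `uw` between the two classes would give
`0 = δ_u·δ_w = −e(u,w)`. Conversely a cut vertex `v` separates `V ∖ {v}` into sides `A`, `B` with no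
edges between them, and the spans of `{δ_u : u ∈ A}` and `{δ_u : u ∈ B}` split `Λ(G)`
orthogonally: together they span, as `Σ_u δ_u = 0`, and they meet trivially as the form is
positive definite.
-/

section Graph

variable {α : Type*} {G : SimpleGraph α}

lemma SimpleGraph.Preconnected.apply_eq_of_forall_adj {β : Type*} (hG : G.Preconnected)
    {f : α → β} (hf : ∀ u w, G.Adj u w → f u = f w) (a b : α) : f a = f b := by
  by_contra hne
  obtain ⟨p⟩ := hG a b
  obtain ⟨d, -, hd, hd'⟩ := p.exists_boundary_dart {u | f u = f a} rfl (Ne.symm hne)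
  exact hd' ((hf _ _ d.adj).symm.trans hd)

lemma SimpleGraph.exists_separation_of_not_connected_induce {s : Set α} (hs : s.Nonempty)
    (h : ¬ (G.induce s).Connected) :
    ∃ A B : Set α, A.Nonempty ∧ B.Nonempty ∧ Disjoint A B ∧ A ∪ B = s ∧
      ∀ a ∈ A, ∀ b ∈ B, ¬ G.Adj a b := by
  have : Nonempty s := hs.to_subtype
  obtain ⟨a, b, hab⟩ : ∃ a b : s, ¬ (G.induce s).Reachable a b := by
    by_contra! hr
    exact h ⟨hr⟩
  let R : Set s := {x | (G.induce s).Reachable a x}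
  refine ⟨(↑) '' R, (↑) '' Rᶜ, ⟨a, a, SimpleGraph.Reachable.refl _, rfl⟩, ⟨b, b, hab, rfl⟩,
    Set.disjoint_image_iff Subtype.val_injective |>.mpr disjoint_compl_right, ?_, ?_⟩
  · rw [← Set.image_union, Set.union_compl_self, Set.image_univ, Subtype.range_coe]
  · rintro _ ⟨x, hx, rfl⟩ _ ⟨y, hy, rfl⟩ hxy
    exact hy (hx.trans (SimpleGraph.induce_adj.mpr hxy).reachable)

end Graph

lemma LinearMap.apply_eq_zero_of_mem_span {R M N P : Type*} [CommSemiring R] [AddCommMonoid M]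
    [AddCommMonoid N] [AddCommMonoid P] [Module R M] [Module R N] [Module R P]
    (B : M →ₗ[R] N →ₗ[R] P) {s : Set M} {t : Set N} (h : ∀ x ∈ s, ∀ y ∈ t, B x y = 0)
    {x : M} {y : N} (hx : x ∈ Submodule.span R s) (hy : y ∈ Submodule.span R t) :
    B x y = 0 := by
  have hx' : ∀ y ∈ t, x ∈ LinearMap.ker (B.flip y) := fun y hy =>
    Submodule.span_le.mpr (fun x' hx' => h x' hx' y hy) hx
  exact (Submodule.span_le (p := LinearMap.ker (B x))).mpr (fun y' hy' => hx' y' hy') hy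

lemma Int.mul_nonpos_of_abs_add_le_one {a b : ℤ} (h : |a + b| ≤ 1) : a * b ≤ 0 := by
  obtain ⟨h₁, h₂⟩ := abs_le.mp h
  rcases lt_trichotomy a 0 with ha | rfl | ha
  · exact mul_nonpos_of_nonpos_of_nonneg ha.le (by omega)
  · simp
  · exact mul_nonpos_of_nonneg_of_nonpos ha.le (by omega)

lemma mgraph_adj {V : Type*} (e : V → V → ℕ) {u w : V} :
    (mgraph e).Adj u w ↔ u ≠ w ∧ (0 < e u w ∨ 0 < e w u) :=
  SimpleGraph.fromRel_adj _ _ _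

lemma indFn_singleton {V : Type*} [DecidableEq V] (v : V) : indFn {v} = Pi.single v (1 : ℤ) := by
  ext u
  simp [indFn, Pi.single_apply]

section Form

variable {V : Type*} [Fintype V]

def diffForm (e : V → V → ℕ) : LinearMap.BilinForm ℤ (V → ℤ) :=
  LinearMap.mk₂ ℤ (fun x y => ∑ u, ∑ w, (e u w : ℤ) * (x u - x w) * (y u - y w))
    (fun _ _ _ => by simp only [Pi.add_apply, ← Finset.sum_add_distrib]; congr! 2; ring)
    (fun _ _ _ => by simp only [Pi.smul_apply, smul_eq_mul, Finset.mul_sum]; congr! 2; ring)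
    (fun _ _ _ => by simp only [Pi.add_apply, ← Finset.sum_add_distrib]; congr! 2; ring)
    (fun _ _ _ => by simp only [Pi.smul_apply, smul_eq_mul, Finset.mul_sum]; congr! 2; ring)

lemma diffForm_apply (e : V → V → ℕ) (x y : V → ℤ) :
    diffForm e x y = ∑ u, ∑ w, (e u w : ℤ) * (x u - x w) * (y u - y w) := rfl

lemma span_one_le_ker_diffForm (e : V → V → ℕ) :
    Submodule.span ℤ {(fun _ => (1 : ℤ) : V → ℤ)} ≤ LinearMap.ker (diffForm e) := by
  rw [Submodule.span_le, Set.singleton_subset_iff, SetLike.mem_coe, LinearMap.mem_ker]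
  ext y
  simp [diffForm_apply]

lemma span_one_le_ker_flip_diffForm (e : V → V → ℕ) :
    Submodule.span ℤ {(fun _ => (1 : ℤ) : V → ℤ)} ≤ LinearMap.ker (diffForm e).flip := by
  rw [Submodule.span_le, Set.singleton_subset_iff, SetLike.mem_coe, LinearMap.mem_ker]
  ext y
  simp [diffForm_apply]

def glForm (e : V → V → ℕ) : LinearMap.BilinForm ℤ (GLat V) :=
  (diffForm e).liftQ₂ _ _ (span_one_le_ker_diffForm e) (span_one_le_ker_flip_diffForm e)

lemma glForm_glmk (e : V → V → ℕ) (x y : V → ℤ) :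
    glForm e (glmk x) (glmk y) = diffForm e x y := rfl

lemma qform_eq_glForm_div_two (e : V → V → ℕ) (a b : GLat V) :
    qform e a b = glForm e a b / 2 := by
  conv_rhs => rw [← Quotient.out_eq a, ← Quotient.out_eq b]
  rfl

end Form

section Lattice

variable {V : Type*} [Fintype V]

lemma glmk_eq_zero_iff (x : V → ℤ) : glmk x = 0 ↔ ∃ c, ∀ u, x u = c := by
  rw [Submodule.Quotient.mk_eq_zero, Submodule.mem_span_singleton]
  simp only [funext_iff, Pi.smul_apply, smul_eq_mul, mul_one]
  exact ⟨fun ⟨c, hc⟩ => ⟨c, fun u => (hc u).symm⟩, fun ⟨c, hc⟩ => ⟨c, fun u => (hc u).symm⟩⟩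

variable [DecidableEq V]

lemma glmk_single_ne_zero {u w : V} (h : u ≠ w) : glmk (Pi.single u 1 : V → ℤ) ≠ 0 := by
  rw [Ne, glmk_eq_zero_iff]
  rintro ⟨c, hc⟩
  have hu := hc u
  have hw := hc w
  simp [h.symm] at hu hw
  omega

lemma sum_glmk_single : ∑ u, glmk (Pi.single u 1 : V → ℤ) = 0 := by
  change ∑ u, Submodule.mkQ _ (Pi.single u 1 : V → ℤ) = 0
  rw [← map_sum, Finset.univ_sum_single]
  exact (Submodule.Quotient.mk_eq_zero _).mpr (Submodule.mem_span_singleton_self _)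

lemma span_glmk_single_eq_top :
    Submodule.span ℤ (Set.range fun u => glmk (Pi.single u 1 : V → ℤ)) = ⊤ := by
  have : (Set.range fun u => glmk (Pi.single u 1 : V → ℤ)) =
      Submodule.mkQ _ '' Set.range (Pi.basisFun ℤ V) := by
    ext; simp
  rw [this, Submodule.span_image, (Pi.basisFun ℤ V).span_eq, Submodule.map_top,
    Submodule.range_mkQ]

lemma span_glmk_single_compl_eq_top (v : V) :
    Submodule.span ℤ ((fun u => glmk (Pi.single u 1 : V → ℤ)) '' {v}ᶜ) = ⊤ := by
  rw [eq_top_iff, ← span_glmk_single_eq_top, Submodule.span_le]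
  rintro _ ⟨u, rfl⟩
  by_cases huv : u = v
  · subst huv
    dsimp only
    have hsum := Finset.add_sum_erase _ (fun w => glmk (Pi.single w 1 : V → ℤ))
      (Finset.mem_univ u)
    rw [sum_glmk_single, add_eq_zero_iff_eq_neg] at hsum
    rw [SetLike.mem_coe, hsum]
    refine neg_mem (Submodule.sum_mem _ fun w hw => Submodule.subset_span ⟨w, ?_, rfl⟩)
    exact (Finset.mem_erase.mp hw).1
  · exact Submodule.subset_span ⟨u, huv, rfl⟩

end Lattice

section GraphLattice

variable {V : Type*} [Fintype V] (e : V → V → ℕ)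

lemma mul_eq_zero_of_mgraph_adj {x y : V → ℤ} (hterm : ∀ u w, (x u - x w) * (y u - y w) ≤ 0)
    (h : 0 ≤ diffForm e x y) {u w : V} (hadj : (mgraph e).Adj u w) :
    (x u - x w) * (y u - y w) = 0 := by
  have hnonpos : ∀ u w, (e u w : ℤ) * (x u - x w) * (y u - y w) ≤ 0 := fun u w => by
    rw [mul_assoc]
    exact mul_nonpos_of_nonneg_of_nonpos (Int.natCast_nonneg _) (hterm u w)
  have hrow : ∀ u, ∑ w, (e u w : ℤ) * (x u - x w) * (y u - y w) ≤ 0 := fun u =>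
    Finset.sum_nonpos fun w _ => hnonpos u w
  have hsum := le_antisymm (Finset.sum_nonpos fun u _ => hrow u) h
  have hzero : ∀ u w, (e u w : ℤ) * ((x u - x w) * (y u - y w)) = 0 := fun u w => by
    rw [← mul_assoc]
    exact (Finset.sum_eq_zero_iff_of_nonpos fun w _ => hnonpos u w).mp
      ((Finset.sum_eq_zero_iff_of_nonpos fun u _ => hrow u).mp hsum u (Finset.mem_univ _)) w
      (Finset.mem_univ _)
  rcases ((mgraph_adj e).mp hadj).2 with he | he
  · exact (mul_eq_zero.mp (hzero u w)).resolve_left (by positivity)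
  · have := (mul_eq_zero.mp (hzero w u)).resolve_left (by positivity)
    linarith

lemma eq_zero_of_glForm_self_eq_zero (hconn : (mgraph e).Connected) {a : GLat V}
    (h : glForm e a a = 0) : a = 0 := by
  obtain ⟨x, rfl⟩ := Submodule.Quotient.mk_surjective _ a
  have hneg : 0 ≤ diffForm e x (-x) := by
    rw [map_neg, ← glForm_glmk, h, neg_zero]
  have hadj : ∀ u w, (mgraph e).Adj u w → x u = x w := fun u w huw => by
    have := mul_eq_zero_of_mgraph_adj e (fun u w => by
      simp only [Pi.neg_apply]; nlinarith [sq_nonneg (x u - x w)]) hneg huw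
    simp only [Pi.neg_apply] at this
    nlinarith [sq_nonneg (x u - x w)]
  obtain ⟨v⟩ := hconn.nonempty
  exact (glmk_eq_zero_iff x).mpr ⟨x v, fun u => hconn.preconnected.apply_eq_of_forall_adj hadj u v⟩

variable [DecidableEq V]

lemma glForm_single_single {u w : V} (h : u ≠ w) :
    glForm e (glmk (Pi.single u 1)) (glmk (Pi.single w 1)) = -(e u w + e w u) := by
  rw [glForm_glmk, diffForm_apply]
  simp [Pi.single_apply, mul_sub, Finset.sum_sub_distrib, mul_ite, h.symm]
  ring

end GraphLattice

section Decomposition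

variable {V : Type*} [Fintype V] [DecidableEq V] (e : V → V → ℕ)

lemma mul_eq_zero_of_add_eq_single {f g : V → ℤ} {v : V}
    (hfg : ∀ u, f u + g u = (Pi.single v 1 : V → ℤ) u) (h : 0 ≤ diffForm e f g) {u w : V}
    (hadj : (mgraph e).Adj u w) : (f u - f w) * (g u - g w) = 0 := by
  refine mul_eq_zero_of_mgraph_adj e (fun u w => Int.mul_nonpos_of_abs_add_le_one ?_) h hadj
  rw [show f u - f w + (g u - g w) = (f u + g u) - (f w + g w) by ring, hfg, hfg]
  simp only [Pi.single_apply]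
  split_ifs <;> norm_num

lemma glIrreducible_glmk_single (hconn : (mgraph e).Connected) {v : V}
    (hv : (SimpleGraph.induce (({v}ᶜ : Finset V) : Set V) (mgraph e)).Connected) :
    GLIrreducible e (glmk (Pi.single v 1)) := by
  obtain ⟨⟨u₀, hu₀⟩⟩ := hv.nonempty
  replace hu₀ : u₀ ≠ v := by simpa using hu₀
  refine ⟨glmk_single_ne_zero hu₀.symm, ?_⟩
  rintro ⟨y, z, hy, hz, hyz, hq⟩
  obtain ⟨f, rfl⟩ := Submodule.Quotient.mk_surjective _ y
  set g : V → ℤ := Pi.single v 1 - f with hg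
  obtain rfl : z = glmk g := by rw [eq_sub_of_add_eq' hyz.symm]; rfl
  rw [qform_eq_glForm_div_two, glForm_glmk] at hq
  have hedge : ∀ {u w}, (mgraph e).Adj u w → (f u - f w) * (g u - g w) = 0 :=
    mul_eq_zero_of_add_eq_single e (v := v) (fun u => by simp [hg]) (by omega)
  have hg_off : ∀ u, u ≠ v → g u = -f u := fun u hu => by simp [hg, hu]
  have hf : ∀ u, u ≠ v → f u = f u₀ := fun u hu => by
    refine hv.preconnected.apply_eq_of_forall_adj (f := fun x => f x) ?_
      ⟨u, by simpa⟩ ⟨u₀, by simpa⟩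
    rintro ⟨a, ha⟩ ⟨b, hb⟩ hab
    replace ha : a ≠ v := by simpa using ha
    replace hb : b ≠ v := by simpa using hb
    have hab₀ := hedge (SimpleGraph.induce_adj.mp hab)
    rw [hg_off a ha, hg_off b hb] at hab₀
    show f a = f b
    nlinarith [sq_nonneg (f a - f b)]
  have : Nontrivial V := nontrivial_of_ne _ _ hu₀
  obtain ⟨w, hvw⟩ := hconn.preconnected.exists_adj_of_nontrivial v
  have hwv : w ≠ v := hvw.ne.symm
  have hconst : ∀ x : V → ℤ, (∀ u, u ≠ v → x u = x w) → x v = x w → glmk x = 0 :=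
    fun x hoff hxv => (glmk_eq_zero_iff x).mpr
      ⟨x w, fun u => if hu : u = v then hu ▸ hxv else hoff u hu⟩
  rcases mul_eq_zero.mp (hedge hvw) with h | h
  · exact hy (hconst f (fun u hu => (hf u hu).trans (hf w hwv).symm) (by omega))
  · refine hz (hconst g (fun u hu => ?_) (by omega))
    rw [hg_off u hu, hg_off w hwv, hf u hu, hf w hwv]

def IsOrthogonalSplitting (L₁ L₂ : Submodule ℤ (GLat V)) : Prop :=
  L₁ ≠ ⊥ ∧ L₂ ≠ ⊥ ∧ L₁ ⊓ L₂ = ⊥ ∧ L₁ ⊔ L₂ = ⊤ ∧ ∀ a ∈ L₁, ∀ b ∈ L₂, qform e a b = 0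

lemma exists_glmk_single_notMem {L L' : Submodule ℤ (GLat V)} (hL' : L' ≠ ⊥)
    (hinf : L ⊓ L' = ⊥) : ∃ v, glmk (Pi.single v 1) ∉ L := by
  by_contra! h
  have hL : L = ⊤ := by
    rw [eq_top_iff, ← span_glmk_single_eq_top, Submodule.span_le]
    rintro _ ⟨v, rfl⟩
    exact h v
  exact hL' (by rwa [hL, top_inf_eq] at hinf)

lemma not_isOrthogonalSplitting (hconn : (mgraph e).Connected)
    (hirr : ∀ v : V, GLIrreducible e (glmk (Pi.single v 1))) (L₁ L₂ : Submodule ℤ (GLat V)) :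
    ¬ IsOrthogonalSplitting e L₁ L₂ := by
  rintro ⟨h₁, h₂, hinf, hsup, horth⟩
  have hmem : ∀ v, glmk (Pi.single v 1) ∈ L₁ ∨ glmk (Pi.single v 1) ∈ L₂ := by
    intro v
    obtain ⟨y, hy, z, hz, hyz⟩ := Submodule.mem_sup.mp (hsup ▸ Submodule.mem_top)
    by_contra! h
    refine (hirr v).2 ⟨y, z, ?_, ?_, hyz.symm, (horth y hy z hz).ge⟩
    · rintro rfl
      exact h.2 (by rwa [← hyz, zero_add])
    · rintro rfl
      exact h.1 (by rwa [← hyz, add_zero])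
  obtain ⟨a, ha⟩ := exists_glmk_single_notMem (L := L₂) h₁ (by rwa [inf_comm])
  obtain ⟨b, hb⟩ := exists_glmk_single_notMem h₂ hinf
  obtain ⟨p⟩ := hconn.preconnected a b
  obtain ⟨d, -, hd₁, hd₂⟩ :=
    p.exists_boundary_dart {u | glmk (Pi.single u 1) ∈ L₁} ((hmem a).resolve_right ha) hb
  have hq := horth _ hd₁ _ ((hmem d.snd).resolve_left hd₂)
  rw [qform_eq_glForm_div_two, glForm_single_single e d.adj.ne] at hq
  rcases ((mgraph_adj e).mp d.adj).2 with h | h <;> omega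

lemma exists_isOrthogonalSplitting (hconn : (mgraph e).Connected)
    (hcard : 2 ≤ Fintype.card V) {v : V}
    (hv : ¬ (SimpleGraph.induce (({v}ᶜ : Finset V) : Set V) (mgraph e)).Connected) :
    ∃ L₁ L₂, IsOrthogonalSplitting e L₁ L₂ := by
  obtain ⟨u₀, hu₀⟩ := Fintype.exists_ne_of_one_lt_card hcard v
  obtain ⟨A, B, hA, hB, hAB, hcover, hnadj⟩ :=
    SimpleGraph.exists_separation_of_not_connected_induce ⟨u₀, by simpa⟩ hv
  rw [Finset.coe_compl, Finset.coe_singleton] at hcover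
  set δ : V → GLat V := fun u => glmk (Pi.single u 1)
  have hne : ∀ u ∈ A ∪ B, δ u ≠ 0 := fun u hu =>
    glmk_single_ne_zero (by simpa [hcover] using hu : u ≠ v)
  have horth : ∀ a ∈ Submodule.span ℤ (δ '' A), ∀ b ∈ Submodule.span ℤ (δ '' B),
      glForm e a b = 0 := by
    refine fun a ha b hb => (glForm e).apply_eq_zero_of_mem_span ?_ ha hb
    rintro _ ⟨a, ha, rfl⟩ _ ⟨b, hb, rfl⟩
    have hab : a ≠ b := hAB.ne_of_mem ha hb
    obtain ⟨hab₀, hba₀⟩ : e a b = 0 ∧ e b a = 0 := by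
      simpa [mgraph_adj, hab] using hnadj a ha b hb
    exact (glForm_single_single e hab).trans (by simp [hab₀, hba₀])
  refine ⟨Submodule.span ℤ (δ '' A), Submodule.span ℤ (δ '' B), ?_, ?_, ?_, ?_, ?_⟩
  · obtain ⟨a, ha⟩ := hA
    exact (Submodule.ne_bot_iff _).mpr
      ⟨δ a, Submodule.subset_span ⟨a, ha, rfl⟩, hne a (Or.inl ha)⟩
  · obtain ⟨b, hb⟩ := hB
    exact (Submodule.ne_bot_iff _).mpr
      ⟨δ b, Submodule.subset_span ⟨b, hb, rfl⟩, hne b (Or.inr hb)⟩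
  · rw [eq_bot_iff]
    exact fun x hx => (Submodule.mem_bot ℤ).mpr
      (eq_zero_of_glForm_self_eq_zero e hconn (horth x hx.1 x hx.2))
  · rw [← Submodule.span_union, ← Set.image_union, hcover, span_glmk_single_compl_eq_top]
  · intro a ha b hb
    rw [qform_eq_glForm_div_two, horth a ha b hb, Int.zero_ediv]

end Decomposition

theorem stmt12_general {V : Type*} [Fintype V] [DecidableEq V] (e : V → V → ℕ)
    (hconn : (mgraph e).Connected)
    (hcard : 2 ≤ Fintype.card V) :
    ((∀ v : V, (SimpleGraph.induce (({v}ᶜ : Finset V) : Set V) (mgraph e)).Connected) ↔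
      (∀ v : V, GLIrreducible e (glmk (indFn {v})))) ∧
    ((∀ v : V, GLIrreducible e (glmk (indFn {v}))) ↔
      ¬ ∃ L₁ L₂ : Submodule ℤ (GLat V), L₁ ≠ ⊥ ∧ L₂ ≠ ⊥ ∧
        L₁ ⊓ L₂ = ⊥ ∧ L₁ ⊔ L₂ = ⊤ ∧ ∀ a ∈ L₁, ∀ b ∈ L₂, qform e a b = 0) := by
  simp only [indFn_singleton]
  have h12 : (∀ v : V, (SimpleGraph.induce (({v}ᶜ : Finset V) : Set V) (mgraph e)).Connected) →
      ∀ v, GLIrreducible e (glmk (Pi.single v 1)) :=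
    fun h v => glIrreducible_glmk_single e hconn (h v)
  have h23 : (∀ v, GLIrreducible e (glmk (Pi.single v 1))) →
      ¬ ∃ L₁ L₂, IsOrthogonalSplitting e L₁ L₂ :=
    fun hirr ⟨L₁, L₂, h⟩ => not_isOrthogonalSplitting e hconn hirr L₁ L₂ h
  have h31 : (¬ ∃ L₁ L₂, IsOrthogonalSplitting e L₁ L₂) →
      ∀ v : V, (SimpleGraph.induce (({v}ᶜ : Finset V) : Set V) (mgraph e)).Connected :=
    fun h v => by_contra fun hv => h (exists_isOrthogonalSplitting e hconn hcard hv)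
  exact ⟨⟨h12, h31 ∘ h23⟩, ⟨h23, h12 ∘ h31⟩⟩

/-- For a connected multigraph `G` with at least two vertices, the following are
equivalent: (i) `G` is 2-connected; (ii) every class `[{v}]` is irreducible in `Λ(G)`;
(iii) `Λ(G)` is indecomposable. -/
theorem stmt12 {V : Type*} [Fintype V] [DecidableEq V] (e : V → V → ℕ)
    (hsym : ∀ u v, e u v = e v u) (hloop : ∀ v, e v v = 0)
    (hconn : (mgraph e).Connected)
    (hcard : 2 ≤ Fintype.card V) :
    ((∀ v : V, (SimpleGraph.induce (({v}ᶜ : Finset V) : Set V) (mgraph e)).Connected) ↔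
      (∀ v : V, GLIrreducible e (glmk (indFn {v})))) ∧
    ((∀ v : V, GLIrreducible e (glmk (indFn {v}))) ↔
      ¬ ∃ L₁ L₂ : Submodule ℤ (GLat V), L₁ ≠ ⊥ ∧ L₂ ≠ ⊥ ∧
        L₁ ⊓ L₂ = ⊥ ∧ L₁ ⊔ L₂ = ⊤ ∧ ∀ a ∈ L₁, ∀ b ∈ L₂, qform e a b = 0) :=
  stmt12_general e hconn hcard
end

section
/- If L is decomposable, then σ_m = m − 1. -/
/-- The standard inner product on `ℤ^ι`. -/
def dotI {ι : Type*} [Fintype ι] (x y : ι → ℤ) : ℤ := ∑ i, x i * y i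

/-- Pairing against a fixed vector `y`, as a linear map `ℤ^ι → ℤ`. -/
def dotMap {ι : Type*} [Fintype ι] (y : ι → ℤ) : (ι → ℤ) →ₗ[ℤ] ℤ where
  toFun x := ∑ i, x i * y i
  map_add' a b := by simp [add_mul, Finset.sum_add_distrib]
  map_smul' c a := by simp [Finset.mul_sum, mul_assoc]

/-- `v_0, …, v_d` is an obtuse superbase for a sublattice `M` of `ℤ^ι` (of rank `d`)
if the family spans `M`, sums to zero, and has pairwise non-positive inner products. -/
def ObtuseSuperbase {ι : Type*} [Fintype ι] (M : Submodule ℤ (ι → ℤ)) (d : ℕ)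
    (v : Fin (d + 1) → ι → ℤ) : Prop :=
  Submodule.span ℤ (Set.range v) = M ∧ (∑ i, v i) = 0 ∧
    ∀ i j, i ≠ j → dotI (v i) (v j) ≤ 0

/-- The changemaker condition for `(σ_1, …, σ_t)` (indexed here by `Fin t`, so `σ i`
corresponds to `σ_{i+1}` in 1-based notation): `0 ≤ σ_1 ≤ 1` and
`σ_{i−1} ≤ σ_i ≤ σ_1 + … + σ_{i−1} + 1` for `1 < i ≤ t`. -/
def ChangemakerZ {t : ℕ} (σ : Fin t → ℤ) : Prop :=
  (∀ i : Fin t, (i : ℕ) = 0 → 0 ≤ σ i ∧ σ i ≤ 1) ∧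
  (∀ i j : Fin t, (j : ℕ) + 1 = (i : ℕ) →
    σ j ≤ σ i ∧ σ i ≤ (∑ k ∈ Finset.univ.filter (fun k : Fin t => (k : ℕ) < (i : ℕ)), σ k) + 1)

/-!
Greene's standard basis `v_1, …, v_{t-1}` of the changemaker lattice `L` consists of vectors that
are not sums of two nonzero orthogonal vectors of `L`, so each of them lies in one summand of an
orthogonal decomposition `L = L₁ ⊕ L₂`. Unless `σ_m = m - 1`, every `v_i` with `i > 1` has nonzero
inner product with some `v_j`, `0 < j < i`, so all `v_i` lie in the summand containing `v_1`; since
they span `L`, the other summand is zero.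

Indices are `0`-based throughout, and `σ` is extended to a sequence `ℕ → ℤ`.
-/

namespace Changemaker

open Finset

section Orthogonal

variable {ι : Type*} [Fintype ι]

lemma dotI_comm (x y : ι → ℤ) : dotI x y = dotI y x := by
  simp only [dotI, mul_comm]

lemma eq_zero_of_dotI_self_eq_zero {z : ι → ℤ} (h : dotI z z = 0) : z = 0 :=
  funext fun k => (sum_mul_self_eq_zero_iff univ z).mp h k (mem_univ k)

lemma eq_bot_of_le_of_orthogonal {L₁ L₂ : Submodule ℤ (ι → ℤ)} (hle : L₂ ≤ L₁)
    (horth : ∀ x ∈ L₁, ∀ y ∈ L₂, dotI x y = 0) : L₂ = ⊥ :=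
  (Submodule.eq_bot_iff _).mpr fun z hz => eq_zero_of_dotI_self_eq_zero (horth z (hle hz) z hz)

def IsOrthIrreducible (N : Submodule ℤ (ι → ℤ)) (v : ι → ℤ) : Prop :=
  ∀ x ∈ N, ∀ y ∈ N, x + y = v → dotI x y = 0 → x = 0 ∨ y = 0

lemma IsOrthIrreducible.mem_or_mem {N L₁ L₂ : Submodule ℤ (ι → ℤ)} {v : ι → ℤ}
    (hv : IsOrthIrreducible N v) (hvN : v ∈ N) (h₁ : L₁ ≤ N) (h₂ : L₂ ≤ N)
    (hsup : L₁ ⊔ L₂ = N) (horth : ∀ x ∈ L₁, ∀ y ∈ L₂, dotI x y = 0) : v ∈ L₁ ∨ v ∈ L₂ := by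
  rw [← hsup] at hvN
  obtain ⟨x, hx, y, hy, rfl⟩ := Submodule.mem_sup.mp hvN
  rcases hv x (h₁ hx) y (h₂ hy) rfl (horth x hx y hy) with rfl | rfl
  · exact Or.inr (by simpa using hy)
  · exact Or.inl (by simpa using hx)

end Orthogonal

section Criteria

variable {ι : Type*} [Fintype ι] {w x y v : ι → ℤ}

lemma eq_zero_of_nonpos_of_dotI_eq_zero (hw : ∀ k, 0 < w k) (hx : ∀ k, x k ≤ 0)
    (h : dotI x w = 0) : x = 0 := by
  funext k
  have hterm := (sum_eq_zero_iff_of_nonpos fun k _ =>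
    mul_nonpos_of_nonpos_of_nonneg (hx k) (hw k).le).mp h k (mem_univ k)
  exact (mul_eq_zero.mp hterm).resolve_right (hw k).ne'

lemma dotI_le_sum_of_nonpos (hw : ∀ k, 0 ≤ w k) (s : Finset ι) (hx : ∀ k ∉ s, x k ≤ 0) :
    dotI x w ≤ ∑ k ∈ s, x k * w k :=
  sum_le_sum_of_subset_of_nonpos' (subset_univ s) fun k _ hk =>
    mul_nonpos_of_nonpos_of_nonneg (hx k hk) (hw k)

lemma mul_nonpos_of_abs_add_le_one {a b : ℤ} (h : |a + b| ≤ 1) : a * b ≤ 0 := by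
  rw [abs_le] at h
  rcases lt_trichotomy a 0 with ha | rfl | ha <;> nlinarith

lemma mul_eq_zero_of_dotI_eq_zero (hle : ∀ k, x k * y k ≤ 0) (h : dotI x y = 0) (k : ι) :
    x k * y k = 0 :=
  (sum_eq_zero_iff_of_nonpos fun k _ => hle k).mp h k (mem_univ k)

lemma eq_zero_or_eq_zero_of_disjoint_support (hw : ∀ k, 0 < w k) {I : ι}
    (hv : ∀ k ≠ I, v k ≤ 0) (hxy : x + y = v) (hdisj : ∀ k, x k * y k = 0)
    (hx : dotI x w = 0) (hy : dotI y w = 0) : x = 0 ∨ y = 0 := by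
  wlog hxI : x I = 0 generalizing x y
  · have hyI := (mul_eq_zero.mp (hdisj I)).resolve_left hxI
    exact (this (by rw [add_comm, hxy]) (fun k => by rw [mul_comm, hdisj]) hy hx hyI).symm
  refine Or.inl (eq_zero_of_nonpos_of_dotI_eq_zero hw (fun k => ?_) hx)
  have hk := congrFun hxy k
  simp only [Pi.add_apply] at hk
  by_cases hkI : k = I
  · rw [hkI, hxI]
  · rcases mul_eq_zero.mp (hdisj k) with h | h <;> linarith [hv k hkI]

theorem isOrthIrreducible_of_unit (hw : ∀ k, 0 < w k) {I : ι} (hI : v I = 1)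
    (hv : ∀ k ≠ I, v k = 0 ∨ v k = -1) : IsOrthIrreducible (LinearMap.ker (dotMap w)) v := by
  intro x hx y hy hxy horth
  refine eq_zero_or_eq_zero_of_disjoint_support hw
    (fun k hk => by rcases hv k hk with h | h <;> omega) hxy
    (mul_eq_zero_of_dotI_eq_zero (fun k => mul_nonpos_of_abs_add_le_one ?_) horth) hx hy
  rw [← Pi.add_apply x y, hxy, abs_le]
  by_cases hkI : k = I
  · subst hkI; omega
  · rcases hv k hkI with h | h <;> omega

lemma exists_eq_neg_one_of_sum_eq_neg_one {f : ι → ℤ} (hf : ∀ k, f k ≤ 0)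
    (h : ∑ k, f k = -1) : ∃ K, f K = -1 ∧ ∀ k ≠ K, f k = 0 := by
  classical
  obtain ⟨K, -, hK⟩ := exists_lt_of_sum_lt (s := univ) (f := f) (g := fun _ => (0 : ℤ))
    (by simp [h])
  have hrest := sum_erase_add univ f (mem_univ K)
  have hle : ∑ k ∈ univ.erase K, f k ≤ 0 := sum_nonpos fun k _ => hf k
  have hKeq : f K = -1 := by omega
  refine ⟨K, hKeq, fun k hk => ?_⟩
  exact (sum_eq_zero_iff_of_nonpos fun k _ => hf k).mp (by omega) k
    (mem_erase.mpr ⟨hk, mem_univ k⟩)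

variable {I O : ι}

lemma false_of_tight_split (hw : ∀ k, 0 < w k) (hIO : I ≠ O) (hI : v I = 1)
    (hvle : ∀ k ≠ I, v k ≤ 0) (hheavy : ∀ k ≠ I, v k = 0 → w I ≤ w k)
    (hxy : ∀ k, x k + y k = v k) (hxO : x O = -1) (hyO : y O = -1)
    (hle : ∀ k ≠ O, x k * y k ≤ 0) (horth : dotI x y = 0) (hx : dotI x w = 0)
    (hy : dotI y w = 0) : False := by
  classical
  -- Apart from the coordinate `O`, where `x O * y O = 1`, exactly one coordinate `K` has
  -- `x K * y K = -1`; all other products vanish.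
  obtain ⟨K, hK, hrest⟩ := exists_eq_neg_one_of_sum_eq_neg_one
    (f := fun k => x k * y k - if k = O then 1 else 0)
    (fun k => by by_cases hk : k = O <;> simp [hk, hxO, hyO, hle k])
    (by simp only [sum_sub_distrib, sum_ite_eq', mem_univ, if_true]; rw [← dotI, horth]; norm_num)
  have hKO : K ≠ O := by rintro rfl; simp [hxO, hyO] at hK
  simp only [hKO, if_false, sub_zero] at hK
  have hdisj : ∀ k ≠ O, k ≠ K → x k * y k = 0 := fun k hkO hkK => by
    simpa [hkO] using hrest k hkK
  have hvK : v K = 0 := by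
    rcases Int.eq_one_or_neg_one_of_mul_eq_neg_one' hK with ⟨h₁, h₂⟩ | ⟨h₁, h₂⟩ <;>
      linarith [hxy K]
  have hKI : K ≠ I := by rintro rfl; omega
  have hwIK := hheavy K hKI hvK
  clear hrest hle horth
  wlog hxI : x I = 0 generalizing x y
  · have hyI : y I = 0 := (mul_eq_zero.mp (hdisj I hIO hKI.symm)).resolve_left hxI
    exact this (fun k => by linarith [hxy k]) hyO hxO hy hx (by rw [mul_comm, hK])
      (fun k hkO hkK => by rw [mul_comm, hdisj k hkO hkK]) hyI
  -- `x` is non-positive away from `K`, so `dotI x w = 0` forces `x K = 1`; then `y` is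
  -- non-positive away from `I` and `K`, and `dotI y w ≤ w I - w O - w K < 0`.
  have hxle : ∀ k ∉ ({O, K} : Finset ι), x k ≤ 0 := fun k hk => by
    simp only [mem_insert, mem_singleton, not_or] at hk
    by_cases hkI : k = I
    · rw [hkI, hxI]
    · rcases mul_eq_zero.mp (hdisj k hk.1 hk.2) with h | h <;> linarith [hxy k, hvle k hkI]
  have hxK : x K = 1 := by
    have := dotI_le_sum_of_nonpos (fun k => (hw k).le) _ hxle
    rw [sum_pair hKO.symm, hxO, hx] at this
    rcases Int.eq_one_or_neg_one_of_mul_eq_neg_one hK with h | h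
    · exact h
    · rw [h] at this; linarith [hw O, hw K]
  have hyK : y K = -1 := by rw [hxK, one_mul] at hK; exact hK
  have hyle : ∀ k ∉ ({O, I, K} : Finset ι), y k ≤ 0 := fun k hk => by
    simp only [mem_insert, mem_singleton, not_or] at hk
    rcases mul_eq_zero.mp (hdisj k hk.1 hk.2.2) with h | h <;> linarith [hxy k, hvle k hk.2.1]
  have := dotI_le_sum_of_nonpos (fun k => (hw k).le) _ hyle
  rw [sum_insert (by simp [hIO.symm, hKO.symm]), sum_pair hKI.symm, hyO, hyK, hy,
    show y I = 1 by linarith [hxy I]] at this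
  linarith [hw O]

theorem isOrthIrreducible_of_tight (hw : ∀ k, 0 < w k) (hIO : I ≠ O) (hI : v I = 1)
    (hO : v O = -2) (hv : ∀ k, k ≠ I → k ≠ O → v k = -1 ∨ (v k = 0 ∧ w I ≤ w k)) :
    IsOrthIrreducible (LinearMap.ker (dotMap w)) v := by
  have hvle : ∀ k ≠ I, v k ≤ 0 := fun k hkI => by
    by_cases hkO : k = O
    · rw [hkO, hO]; norm_num
    · rcases hv k hkI hkO with h | h <;> omega
  have hheavy : ∀ k ≠ I, v k = 0 → w I ≤ w k := fun k hkI hk => by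
    by_cases hkO : k = O
    · rw [hkO, hO] at hk; norm_num at hk
    · rcases hv k hkI hkO with h | h <;> [omega; exact h.2]
  intro x hx y hy hxy horth
  have hxy' : ∀ k, x k + y k = v k := fun k => by rw [← hxy, Pi.add_apply]
  have hle : ∀ k ≠ O, x k * y k ≤ 0 := fun k hkO => by
    refine mul_nonpos_of_abs_add_le_one ?_
    rw [hxy' k, abs_le]
    by_cases hkI : k = I
    · subst hkI; omega
    · rcases hv k hkI hkO with h | h <;> omega
  by_cases hxO : x O = -1
  · exact (false_of_tight_split hw hIO hI hvle hheavy hxy' hxO (by linarith [hxy' O]) hle horth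
      hx hy).elim
  refine eq_zero_or_eq_zero_of_disjoint_support hw hvle hxy
    (mul_eq_zero_of_dotI_eq_zero (fun k => ?_) horth) hx hy
  by_cases hkO : k = O
  · subst hkO
    have hyk : y k = -2 - x k := by linarith [hxy' k]
    rcases lt_trichotomy (x k) (-1) with h | h | h
    · nlinarith
    · exact absurd h hxO
    · nlinarith
  · exact hle k hkO

end Criteria

section Greedy

variable (a : ℕ → ℤ)

def greedy : ℕ → ℤ → Finset ℕ
  | 0, _ => ∅
  | n + 1, s => if a n ≤ s then insert n (greedy n (s - a n)) else greedy n s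

variable {a}

lemma greedy_subset_range (n : ℕ) (s : ℤ) : greedy a n s ⊆ range n := by
  induction n generalizing s with
  | zero => simp [greedy]
  | succ n ih =>
    have hmono := range_subset_range.mpr n.le_succ
    unfold greedy
    split_ifs
    · exact insert_subset (self_mem_range_succ n) ((ih _).trans hmono)
    · exact (ih s).trans hmono

lemma sum_greedy {n : ℕ} (ha : ∀ j < n, a j ≤ ∑ k ∈ range j, a k + 1) {s : ℤ} (h₀ : 0 ≤ s)
    (hs : s ≤ ∑ k ∈ range n, a k) : ∑ j ∈ greedy a n s, a j = s := by
  induction n generalizing s with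
  | zero => simp only [greedy, sum_empty]; simp at hs; omega
  | succ n ih =>
    rw [sum_range_succ] at hs
    have ih' := @ih (fun j hj => ha j (by omega))
    unfold greedy
    split_ifs with h
    · rw [sum_insert fun hn => by simpa using greedy_subset_range n _ hn,
        ih' (by omega) (by omega)]
      ring
    · exact ih' h₀ (by linarith [ha n n.lt_succ_self])

lemma le_of_mem_greedy (ha : ∀ j, 0 ≤ a j) {n j : ℕ} {s : ℤ} (hj : j ∈ greedy a n s) :
    a j ≤ s := by
  induction n generalizing s with
  | zero => simp [greedy] at hj
  | succ n ih =>
    unfold greedy at hj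
    split_ifs at hj with h
    · rcases mem_insert.mp hj with rfl | hj
      · exact h
      · linarith [ih hj, ha n]
    · exact ih hj

/-- When the downward scan reaches `j`, the amount still to be paid is at least what remained
at `k`, hence at least `a k`. -/
lemma mem_greedy_of_le (ha : ∀ j, 0 ≤ a j) {n k j : ℕ} {s : ℤ} (hk : k ∈ greedy a n s)
    (hkj : k ≤ j) (hjn : j < n) (haj : a j ≤ a k) : j ∈ greedy a n s := by
  induction n generalizing s with
  | zero => omega
  | succ n ih =>
    unfold greedy at hk ⊢
    split_ifs at hk ⊢ with h
    · rcases eq_or_lt_of_le (Nat.lt_succ_iff.mp hjn) with rfl | hjn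
      · exact mem_insert_self _ _
      · have hkn : k ≠ n := by omega
        exact mem_insert_of_mem (ih (mem_of_mem_insert_of_ne hk hkn) hjn)
    · rcases eq_or_lt_of_le (Nat.lt_succ_iff.mp hjn) with rfl | hjn
      · exact absurd (haj.trans (le_of_mem_greedy ha hk)) h
      · exact ih hk hjn

end Greedy

section StdBasis

variable (a : ℕ → ℤ)

def IsTight (i : ℕ) : Prop := a i = ∑ j ∈ range i, a j + 1

instance : DecidablePred (IsTight a) := fun _ => inferInstanceAs (Decidable (_ = _))

def support (i : ℕ) : Finset ℕ := if IsTight a i then range i else greedy a i (a i)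

/-- Coefficients of Greene's standard basis vector `v_i = f_i - ∑_{j ∈ A} f_j` of the lattice
orthogonal to `∑ a_j f_j`, where `A` is the greedy representation of `a i` by smaller terms;
when `a i` is one more than the sum of all smaller terms, `v_i = f_i - 2 f_0 - f_1 - ⋯ - f_{i-1}`
instead. -/
def coeff (i j : ℕ) : ℤ :=
  (if j = i then 1 else 0) - (if j ∈ support a i then 1 else 0) -
    (if IsTight a i ∧ j = 0 then 1 else 0)

variable {a}

lemma support_subset_range (i : ℕ) : support a i ⊆ range i := by
  unfold support; split_ifs
  · exact Subset.rfl
  · exact greedy_subset_range i _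

lemma tight_add_sum_support {i : ℕ} (ha : ∀ j ≤ i, a j ≤ ∑ k ∈ range j, a k + 1)
    (hi : 0 ≤ a i) : (if IsTight a i then 1 else 0) + ∑ j ∈ support a i, a j = a i := by
  unfold support
  split_ifs with hT
  · rw [hT]; ring
  · rw [zero_add, sum_greedy (fun j hj => ha j hj.le) hi]
    have := ha i le_rfl
    unfold IsTight at hT
    omega

lemma lt_of_mem_support {i j : ℕ} (h : j ∈ support a i) : j < i :=
  mem_range.mp (support_subset_range i h)

lemma self_notMem_support (i : ℕ) : i ∉ support a i := fun h => (lt_of_mem_support h).false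

lemma coeff_self {i : ℕ} (hi : 0 < i) : coeff a i i = 1 := by
  simp [coeff, hi.ne', self_notMem_support]

lemma coeff_of_lt {i j : ℕ} (h : i < j) : coeff a i j = 0 := by
  have hj : j ∉ support a i := fun h' => (lt_of_mem_support h').asymm h
  have hj₀ : j ≠ 0 := by omega
  simp [coeff, h.ne', hj, hj₀]

lemma coeff_of_ne_of_not_tight {i j : ℕ} (hj : j ≠ i) (hT : ¬ IsTight a i) :
    coeff a i j = if j ∈ support a i then -1 else 0 := by
  simp only [coeff, hj, hT, if_false, false_and]
  split_ifs <;> norm_num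

lemma coeff_tight_zero {i : ℕ} (hi : 0 < i) (hT : IsTight a i) : coeff a i 0 = -2 := by
  simp [coeff, support, hT, hi, hi.ne]

lemma coeff_tight_of_lt {i j : ℕ} (hj : 0 < j) (hji : j < i) (hT : IsTight a i) :
    coeff a i j = -1 := by
  simp [coeff, support, hT, hji, hji.ne, hj.ne']

lemma coeff_le_neg_one_of_mem {i j : ℕ} (hj : j ∈ support a i) : coeff a i j ≤ -1 := by
  have : j ≠ i := (lt_of_mem_support hj).ne
  simp only [coeff, this, hj, if_false, if_true]
  split_ifs <;> norm_num

lemma coeff_nonpos {i j : ℕ} (hj : j ≠ i) : coeff a i j ≤ 0 := by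
  simp only [coeff, hj, if_false]
  split_ifs <;> norm_num

lemma neg_one_le_coeff {i j : ℕ} (hj : j ≠ 0) : -1 ≤ coeff a i j := by
  simp only [coeff, hj, and_false, if_false]
  split_ifs <;> norm_num

lemma sum_coeff_mul {i n : ℕ} (ha₀ : a 0 = 1) (ha : ∀ j ≤ i, a j ≤ ∑ k ∈ range j, a k + 1)
    (hi : 0 ≤ a i) (hin : i < n) : ∑ j ∈ range n, coeff a i j * a j = 0 := by
  have hsupp : support a i ⊆ range n :=
    (support_subset_range i).trans (range_subset_range.mpr hin.le)
  have key := tight_add_sum_support ha hi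
  simp only [coeff, sub_mul, ite_mul, one_mul, zero_mul, sum_sub_distrib, sum_ite_eq',
    mem_range, hin, if_true, sum_ite_mem, inter_eq_right.mpr hsupp]
  split_ifs at key with hT <;> simp [hT, ha₀, (by omega : 0 < n)] <;> linarith

end StdBasis

structure IsChangemaker (a : ℕ → ℤ) (t : ℕ) : Prop where
  zero : a 0 = 1
  pos : ∀ j, 0 < a j
  le_sum : ∀ j < t, a j ≤ ∑ k ∈ range j, a k + 1
  mono : ∀ i j, i ≤ j → j < t → a i ≤ a j

def lattice (a : ℕ → ℤ) (t : ℕ) : Submodule ℤ (Fin t → ℤ) :=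
  LinearMap.ker (dotMap fun k : Fin t => a k)

def stdVec (a : ℕ → ℤ) (t i : ℕ) : Fin t → ℤ := fun k => coeff a i k

def kerGen (a : ℕ → ℤ) (t i : ℕ) : Fin t → ℤ :=
  fun k => (if (k : ℕ) = i then 1 else 0) - a i * (if (k : ℕ) = 0 then 1 else 0)

section StdVec

variable {a : ℕ → ℤ} {t : ℕ}

lemma IsChangemaker.pos_of_one_lt (ha : IsChangemaker a t) {M : ℕ} (hM : 1 < a M) : 0 < M :=
  Nat.pos_of_ne_zero fun h => by rw [h, ha.zero] at hM; exact hM.false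

lemma IsChangemaker.le_sum_of_le (ha : IsChangemaker a t) {i : ℕ} (hit : i < t) :
    ∀ j ≤ i, a j ≤ ∑ k ∈ range j, a k + 1 :=
  fun j hj => ha.le_sum j (by omega)

lemma stdVec_mem_lattice (ha : IsChangemaker a t) {i : ℕ} (hit : i < t) :
    stdVec a t i ∈ lattice a t := by
  change ∑ k : Fin t, coeff a i k * a k = 0
  rw [Fin.sum_univ_eq_sum_range (fun k => coeff a i k * a k)]
  exact sum_coeff_mul ha.zero (ha.le_sum_of_le hit) (ha.pos i).le hit

theorem isOrthIrreducible_stdVec (ha : IsChangemaker a t) {i : ℕ} (hi : 0 < i) (hit : i < t) :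
    IsOrthIrreducible (lattice a t) (stdVec a t i) := by
  have hw : ∀ k : Fin t, 0 < a k := fun k => ha.pos k
  have hI : stdVec a t i ⟨i, hit⟩ = 1 := coeff_self hi
  by_cases hT : IsTight a i
  · refine isOrthIrreducible_of_tight hw (O := ⟨0, by omega⟩) (by simp [Fin.ext_iff]; omega) hI
      (coeff_tight_zero hi hT) fun k hkI hkO => ?_
    have hkI : (k : ℕ) ≠ i := fun h => hkI (Fin.ext h)
    have hkO : (k : ℕ) ≠ 0 := fun h => hkO (Fin.ext h)
    rcases lt_or_gt_of_ne hkI with h | h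
    · exact Or.inl (coeff_tight_of_lt (by omega) h hT)
    · exact Or.inr ⟨coeff_of_lt h, ha.mono i k h.le k.isLt⟩
  · refine isOrthIrreducible_of_unit hw hI fun k hk => ?_
    change coeff a i k = 0 ∨ coeff a i k = -1
    rw [coeff_of_ne_of_not_tight (fun h => hk (Fin.ext h)) hT]
    split_ifs <;> simp

lemma kerGen_eq (ha : IsChangemaker a t) {i : ℕ} (hit : i < t) :
    kerGen a t i = stdVec a t i + ∑ j ∈ support a i, kerGen a t j := by
  have key := tight_add_sum_support (ha.le_sum_of_le hit) (ha.pos i).le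
  funext k
  simp only [Pi.add_apply, Finset.sum_apply, kerGen, stdVec, coeff, sum_sub_distrib, sum_ite_eq,
    ← sum_mul]
  split_ifs at key ⊢ <;> simp_all <;> linarith

lemma kerGen_mem_span (ha : IsChangemaker a t) {i : ℕ} (hit : i < t) :
    kerGen a t i ∈ Submodule.span ℤ (stdVec a t '' Set.Ioo 0 t) := by
  induction i using Nat.strong_induction_on with
  | _ i ih =>
    rcases Nat.eq_zero_or_pos i with rfl | hi
    · convert Submodule.zero_mem _
      funext k
      simp [kerGen, ha.zero]
    · rw [kerGen_eq ha hit]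
      exact Submodule.add_mem _ (Submodule.subset_span ⟨i, ⟨hi, hit⟩, rfl⟩)
        (Submodule.sum_mem _ fun j hj => ih j (lt_of_mem_support hj) (by
          have := lt_of_mem_support hj; omega))

/-- `x = ∑ x_k (f_k - a_k f_0)` on the lattice, and each `f_k - a_k f_0` unfolds into standard
basis vectors. -/
theorem lattice_le_span_stdVec (ha : IsChangemaker a t) :
    lattice a t ≤ Submodule.span ℤ (stdVec a t '' Set.Ioo 0 t) := by
  intro x hx
  have hx' : ∑ k : Fin t, x k * a k = 0 := hx
  have hrep : x = ∑ k : Fin t, x k • kerGen a t k := by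
    funext j
    simp only [Finset.sum_apply, Pi.smul_apply, smul_eq_mul, kerGen, mul_sub, mul_ite, mul_one,
      mul_zero, sum_sub_distrib, Fin.val_inj, sum_ite_eq, mem_univ, if_true]
    by_cases hj : (j : ℕ) = 0 <;> simp [hj, hx']
  rw [hrep]
  exact Submodule.sum_mem _ fun k _ => Submodule.smul_mem _ _ (kerGen_mem_span ha k.isLt)

end StdVec

section Links

variable {a : ℕ → ℤ} {t : ℕ}

lemma dotI_stdVec {i j : ℕ} (hj : j < t) :
    dotI (stdVec a t i) (stdVec a t j) = ∑ k ∈ range (j + 1), coeff a i k * coeff a j k := by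
  unfold dotI stdVec
  rw [Fin.sum_univ_eq_sum_range (fun k => coeff a i k * coeff a j k)]
  refine (sum_subset (range_subset_range.mpr hj) fun k _ hk => ?_).symm
  rw [coeff_of_lt (i := j) (by simpa using hk), mul_zero]

lemma support_nonempty (ha : IsChangemaker a t) {i : ℕ} (hi : 0 < i) (hit : i < t) :
    (support a i).Nonempty := by
  by_contra h
  have key := tight_add_sum_support (ha.le_sum_of_le hit) (ha.pos i).le
  rw [not_nonempty_iff_eq_empty.mp h, sum_empty, add_zero] at key
  split_ifs at key with hT
  · have h0 : a 0 ≤ ∑ j ∈ range i, a j :=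
      single_le_sum (fun j _ => (ha.pos j).le) (mem_range.mpr hi)
    unfold IsTight at hT
    linarith [ha.zero]
  · linarith [ha.pos i]

lemma zero_mem_support_one (ha : IsChangemaker a t) (ht : 1 < t) : 0 ∈ support a 1 := by
  obtain ⟨j, hj⟩ := support_nonempty ha one_pos ht
  rwa [show j = 0 by simpa using lt_of_mem_support hj] at hj

lemma dotI_stdVec_one_pos (ha : IsChangemaker a t) {i : ℕ} (hi : 1 < i) (hit : i < t)
    (hT : IsTight a i) : 0 < dotI (stdVec a t i) (stdVec a t 1) := by
  rw [dotI_stdVec (by omega), sum_range_succ, sum_range_one, coeff_tight_zero (by omega) hT,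
    coeff_tight_of_lt one_pos hi hT, coeff_self one_pos]
  linarith [coeff_le_neg_one_of_mem (zero_mem_support_one ha (by omega))]

lemma dotI_stdVec_min'_support {i K : ℕ} (hT : ¬ IsTight a i) (hK : K ∈ support a i)
    (hmin : ∀ j ∈ support a i, K ≤ j) (hK₀ : 0 < K) (hit : i < t) :
    dotI (stdVec a t i) (stdVec a t K) = -1 := by
  have hKi := lt_of_mem_support hK
  rw [dotI_stdVec (by omega), sum_range_succ, coeff_self hK₀,
    coeff_of_ne_of_not_tight hKi.ne hT, if_pos hK, sum_eq_zero fun k hk => ?_]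
  · norm_num
  · have hkK := mem_range.mp hk
    rw [coeff_of_ne_of_not_tight (by omega) hT, if_neg fun h => (hmin k h).not_gt hkK, zero_mul]

lemma sub_one_le_dotI_stdVec (ha : IsChangemaker a t) {M i : ℕ} (hM : 0 < M) (hMi : M < i)
    (hit : i < t) (hones : ∀ j < M, a j = 1) (hneg : ∀ j < M, coeff a i j ≤ -1) :
    a M - 1 ≤ dotI (stdVec a t i) (stdVec a t M) := by
  have hsum : ∑ j ∈ range M, coeff a M j = -a M := by
    have := sum_coeff_mul (n := M + 1) ha.zero (ha.le_sum_of_le (i := M) (by omega))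
      (ha.pos M).le M.lt_succ_self
    rw [sum_range_succ, coeff_self hM, one_mul,
      sum_congr rfl fun j hj => by rw [hones j (mem_range.mp hj), mul_one]] at this
    linarith
  have hterm : ∑ j ∈ range M, -coeff a M j ≤ ∑ j ∈ range M, coeff a i j * coeff a M j :=
    sum_le_sum fun j hj => by
      have hjM := mem_range.mp hj
      nlinarith [hneg j hjM, coeff_nonpos (a := a) hjM.ne]
  rw [sum_neg_distrib, hsum] at hterm
  rw [dotI_stdVec (by omega), sum_range_succ, coeff_self hM, mul_one]
  linarith [neg_one_le_coeff (a := a) (i := i) hM.ne']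

end Links

section Decomposition

variable {a : ℕ → ℤ} {t : ℕ}

/-- This is where `a M ≠ M` enters: for `a M = M` the vector `v_M = f_M - f_0 - ⋯ - f_{M-1}` is
orthogonal to every `v_j` with `j < M`. -/
theorem exists_dotI_stdVec_ne_zero (ha : IsChangemaker a t) {M : ℕ} (hones : ∀ j < M, a j = 1)
    (hM : 1 < a M) (hne : a M ≠ M) {i : ℕ} (hi : 1 < i) (hit : i < t) :
    ∃ j, 0 < j ∧ j < i ∧ dotI (stdVec a t i) (stdVec a t j) ≠ 0 := by
  by_cases hT : IsTight a i
  · exact ⟨1, one_pos, hi, (dotI_stdVec_one_pos ha hi hit hT).ne'⟩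
  have hsupp := support_nonempty ha (by omega) hit
  have hKmem := min'_mem _ hsupp
  rcases (Nat.eq_zero_or_pos ((support a i).min' hsupp)).symm with hK₀ | hK₀
  · refine ⟨_, hK₀, lt_of_mem_support hKmem, ?_⟩
    rw [dotI_stdVec_min'_support hT hKmem (fun j hj => min'_le _ _ hj) hK₀ hit]
    norm_num
  have hM₀ := ha.pos_of_one_lt hM
  have hsub : ∀ j < M, j < i → j ∈ support a i := fun j hjM hji => by
    have h₀ : 0 ∈ greedy a i (a i) := by rw [hK₀] at hKmem; simpa [support, hT] using hKmem
    simpa [support, hT] using mem_greedy_of_le (fun j => (ha.pos j).le) h₀ (Nat.zero_le j) hji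
      (by rw [hones j hjM, ha.zero])
  have hMi : M < i := by
    by_contra! hiM
    have hrange : support a i = range i := (support_subset_range i).antisymm
      fun j hj => hsub j (by simp at hj; omega) (mem_range.mp hj)
    have hsum := tight_add_sum_support (ha.le_sum_of_le hit) (ha.pos i).le
    rw [if_neg hT, zero_add, hrange, sum_congr rfl fun j hj => hones j (by simp at hj; omega),
      sum_const, card_range, nsmul_eq_mul, mul_one] at hsum
    rcases eq_or_lt_of_le hiM with rfl | hlt
    · exact hne hsum.symm
    · have := hones i hlt; omega
  refine ⟨M, hM₀, hMi, ?_⟩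
  have := sub_one_le_dotI_stdVec ha hM₀ hMi hit hones fun j hj =>
    coeff_le_neg_one_of_mem (hsub j hj (by omega))
  omega

variable {L₁ L₂ : Submodule ℤ (Fin t → ℤ)}

theorem eq_bot_of_stdVec_one_mem (ha : IsChangemaker a t) (h₁ : L₁ ≤ lattice a t)
    (h₂ : L₂ ≤ lattice a t) (hsup : L₁ ⊔ L₂ = lattice a t)
    (horth : ∀ x ∈ L₁, ∀ y ∈ L₂, dotI x y = 0)
    (hlink : ∀ i, 1 < i → i < t → ∃ j, 0 < j ∧ j < i ∧ dotI (stdVec a t i) (stdVec a t j) ≠ 0)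
    (hone : stdVec a t 1 ∈ L₁) : L₂ = ⊥ := by
  have hmem : ∀ i, 0 < i → i < t → stdVec a t i ∈ L₁ := by
    intro i
    induction i using Nat.strong_induction_on with
    | _ i ih =>
      intro hi hit
      rcases (show i = 1 ∨ 1 < i by omega) with rfl | hi
      · exact hone
      obtain ⟨j, hj, hji, hdot⟩ := hlink i hi hit
      refine ((isOrthIrreducible_stdVec ha (by omega) hit).mem_or_mem
        (stdVec_mem_lattice ha hit) h₁ h₂ hsup horth).resolve_right fun h => hdot ?_
      rw [dotI_comm]
      exact horth _ (ih j hji hj (by omega)) _ h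
  refine eq_bot_of_le_of_orthogonal (h₂.trans ((lattice_le_span_stdVec ha).trans ?_)) horth
  rw [Submodule.span_le]
  rintro _ ⟨i, ⟨hi, hit⟩, rfl⟩
  exact hmem i hi hit

theorem apply_eq_of_orthogonal_sup (ha : IsChangemaker a t) {M : ℕ} (hMt : M < t)
    (hones : ∀ j < M, a j = 1) (hM : 1 < a M) (h₁ : L₁ ≤ lattice a t) (h₂ : L₂ ≤ lattice a t)
    (hb₁ : L₁ ≠ ⊥) (hb₂ : L₂ ≠ ⊥) (hsup : L₁ ⊔ L₂ = lattice a t)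
    (horth : ∀ x ∈ L₁, ∀ y ∈ L₂, dotI x y = 0) : a M = M := by
  by_contra hne
  have hlink := fun i (hi : 1 < i) (hit : i < t) =>
    exists_dotI_stdVec_ne_zero (a := a) ha hones hM hne hi hit
  have ht : 1 < t := by linarith [ha.pos_of_one_lt hM]
  rcases (isOrthIrreducible_stdVec ha one_pos ht).mem_or_mem (stdVec_mem_lattice ha ht) h₁ h₂
    hsup horth with h | h
  · exact hb₂ (eq_bot_of_stdVec_one_mem ha h₁ h₂ hsup horth hlink h)
  · exact hb₁ (eq_bot_of_stdVec_one_mem ha h₂ h₁ (by rw [sup_comm, hsup])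
      (fun x hx y hy => by rw [dotI_comm]; exact horth y hy x hx) hlink h)

end Decomposition

section FinSeq

variable {t : ℕ} (σ : Fin t → ℤ)

def toSeq (j : ℕ) : ℤ := if h : j < t then σ ⟨j, h⟩ else 1

lemma toSeq_fin (k : Fin t) : toSeq σ k = σ k := by simp [toSeq]

lemma lattice_toSeq : lattice (toSeq σ) t = LinearMap.ker (dotMap σ) := by
  simp only [lattice, toSeq_fin]

lemma sum_filter_lt_eq_sum_range_toSeq {j : ℕ} (hj : j ≤ t) :
    ∑ k ∈ univ.filter (fun k : Fin t => (k : ℕ) < j), σ k = ∑ k ∈ range j, toSeq σ k := by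
  calc _ = ∑ k : Fin t, if (k : ℕ) < j then toSeq σ k else 0 := by simp only [sum_filter, toSeq_fin]
    _ = ∑ k ∈ range t, if k < j then toSeq σ k else 0 :=
      Fin.sum_univ_eq_sum_range (fun k => if k < j then toSeq σ k else 0) t
    _ = _ := by
      rw [← sum_filter]
      congr 1
      ext k
      simp only [mem_filter, mem_range]
      omega

variable {σ}

theorem isChangemaker_toSeq (hcm : ChangemakerZ σ) (hσ : ∀ i, 1 ≤ σ i) :
    IsChangemaker (toSeq σ) t where
  zero := by
    unfold toSeq; split_ifs with h
    · exact le_antisymm (hcm.1 _ rfl).2 (hσ _)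
    · rfl
  pos j := by
    unfold toSeq; split_ifs
    · exact hσ _
    · exact one_pos
  le_sum j hj := by
    rcases Nat.eq_zero_or_pos j with rfl | hj₀
    · simpa [toSeq, hj] using (hcm.1 ⟨0, hj⟩ rfl).2
    · have := (hcm.2 ⟨j, hj⟩ ⟨j - 1, by omega⟩ (by simp; omega)).2
      rwa [sum_filter_lt_eq_sum_range_toSeq σ hj.le, ← toSeq_fin σ] at this
  mono i j hij hj := by
    induction j, hij using Nat.le_induction with
    | base => exact le_rfl
    | succ j hij ih =>
      refine (ih (by omega)).trans ?_
      have := (hcm.2 ⟨j + 1, hj⟩ ⟨j, by omega⟩ rfl).1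
      rwa [← toSeq_fin σ, ← toSeq_fin σ] at this

end FinSeq

end Changemaker

/-- If the changemaker lattice `L = ⟨w_0⟩^⊥ ⊆ ℤ^t`, `w_0 = σ_1 f_1 + … + σ_t f_t`, is
decomposable, then `σ_m = m − 1`, where `m` is the minimal (1-based) index with
`σ_m > 1`. (Here indices are 0-based, so the conclusion reads `σ m = m`.) -/
theorem stmt15 (t : ℕ) (σ : Fin t → ℤ)
    (hcm : ChangemakerZ σ) (hσ1 : ∀ i, 1 ≤ σ i)
    (m : Fin t) (hm : 1 < σ m) (hmin : ∀ j, j < m → ¬ 1 < σ j)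
    (hdec : ∃ L₁ L₂ : Submodule ℤ (Fin t → ℤ),
      L₁ ≤ LinearMap.ker (dotMap σ) ∧ L₂ ≤ LinearMap.ker (dotMap σ) ∧
      L₁ ≠ ⊥ ∧ L₂ ≠ ⊥ ∧ L₁ ⊓ L₂ = ⊥ ∧ L₁ ⊔ L₂ = LinearMap.ker (dotMap σ) ∧
      ∀ x ∈ L₁, ∀ y ∈ L₂, dotI x y = 0) :
    σ m = ((m : ℕ) : ℤ) := by
  obtain ⟨L₁, L₂, h₁, h₂, hb₁, hb₂, -, hsup, horth⟩ := hdec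
  rw [← Changemaker.lattice_toSeq] at h₁ h₂ hsup
  rw [← Changemaker.toSeq_fin σ m] at hm ⊢
  refine Changemaker.apply_eq_of_orthogonal_sup (Changemaker.isChangemaker_toSeq hcm hσ1)
    m.isLt (fun j hj => ?_) hm h₁ h₂ hb₁ hb₂ hsup horth
  have hjt : j < t := hj.trans m.isLt
  rw [show j = ((⟨j, hjt⟩ : Fin t) : ℕ) from rfl, Changemaker.toSeq_fin]
  exact le_antisymm (not_lt.mp (hmin _ hj)) (hσ1 _)
end
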